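/- arXiv:1412.4241 — 4 statements merged into one kernel-verified Lean document; each statement's English description precedes it below -/
import Mathlib

section
/- Consider M particles with positions x_1,…,x_M ∈ ℤ and colors σ_i, σ'_i ∈ {a,b}. Define ξ(y) = #{i : x_i = y, σ_i = a} and ξ'(y) = #{i : x_i = y, σ'_i = a}, and suppose ξ' ≼ ξ (right tails of ξ' dominated by right tails of ξ) and that the number of a-particles is equal: #{i : σ_i = a} = #{i : σ'_i = a}. Then there exists a bijective relabeling of the σ'-colors among particles at equal positions (i.e., a configuration σ'' equivalent to σ' in the sense that it induces the same occupation numbers ξ') together with a splitting of (x, σ, σ'') into married pairs and singletons with no discrepancies. -/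
/-- A splitting of a doubly-colored particle configuration `(x i, σ i, σ'' i)` into
married pairs and singletons, with no discrepancies.  Colors: `true` = `a`, `false` = `b`. -/
def IsSplitting {M : ℕ} (x : Fin M → ℤ) (σ σ'' : Fin M → Bool)
    (P : Fin M → Option (Fin M)) : Prop :=
  (∀ i, P i = none → σ i = σ'' i) ∧
  (∀ i j, P i = some j → P j = some i ∧ i ≠ j) ∧
  (∀ i j, P i = some j →
    (σ i = true ∧ σ'' i = false ∧ σ j = false ∧ σ'' j = true ∧ x j < x i) ∨
    (σ i = false ∧ σ'' i = true ∧ σ j = true ∧ σ'' j = false ∧ x i < x j))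

/-! Recolour `σ'` inside each site so that the new colouring `σ''` is, site by site, either
below or above `σ`. Then the particles demoted by `σ''` (set `U`) and those promoted (set `V`)
never share a site, and tail dominance says that above every level `U` has at least as many
particles as `V`. Marrying the highest particle of `V` to any particle of `U` above it and
recursing on the rest produces the splitting. -/

open Finset Function

structure IsMarriage {α β : Type*} [LT β] (x : α → β) (U V : Finset α) (P : α → Option α) :
    Prop where
  notMem_of_eq_none : ∀ i, P i = none → i ∉ U ∧ i ∉ V
  symm : ∀ i j, P i = some j → P j = some i
  mem_of_eq_some : ∀ i j, P i = some j →
    (i ∈ U ∧ j ∈ V ∧ x j < x i) ∨ (i ∈ V ∧ j ∈ U ∧ x i < x j)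

namespace IsMarriage

variable {α β : Type*} {x : α → β} {U V : Finset α} {P : α → Option α}

lemma empty [LT β] : IsMarriage x ∅ ∅ (fun _ : α => none) where
  notMem_of_eq_none _ _ := ⟨notMem_empty _, notMem_empty _⟩
  symm _ _ h := by simp at h
  mem_of_eq_some _ _ h := by simp at h

lemma eq_none_of_notMem [LT β] (hP : IsMarriage x U V P) {i : α} (hU : i ∉ U) (hV : i ∉ V) :
    P i = none := by
  cases h : P i with
  | none => rfl
  | some j => rcases hP.mem_of_eq_some i j h with h' | h' <;> simp_all

lemma insert [DecidableEq α] [Preorder β] (hP : IsMarriage x U V P) {u v : α} (hvu : x v < x u)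
    (huU : u ∉ U) (huV : u ∉ V) (hvU : v ∉ U) (hvV : v ∉ V) :
    IsMarriage x (insert u U) (insert v V) (update (update P u (some v)) v (some u)) := by
  have huv : u ≠ v := by rintro rfl; exact lt_irrefl _ hvu
  have hPu := hP.eq_none_of_notMem huU huV
  have hPv := hP.eq_none_of_notMem hvU hvV
  refine ⟨fun i hi => ?_, fun i j hij => ?_, fun i j hij => ?_⟩
  · have := hP.notMem_of_eq_none i
    simp only [update_apply] at hi
    split_ifs at hi
    simp_all
  · have := hP.symm i j
    simp only [update_apply] at hij ⊢
    split_ifs at hij ⊢ <;> simp_all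
  · simp only [update_apply] at hij
    split_ifs at hij
    · simp_all
    · simp_all
    · rcases hP.mem_of_eq_some i j hij with h | h <;> simp [h]

end IsMarriage

theorem exists_isMarriage {α β : Type*} [DecidableEq α] [LinearOrder β] (x : α → β)
    (U V : Finset α) (hsep : ∀ u ∈ U, ∀ v ∈ V, x u ≠ x v) (hcard : #U = #V)
    (htail : ∀ y, #{v ∈ V | y ≤ x v} ≤ #{u ∈ U | y ≤ x u}) : ∃ P, IsMarriage x U V P := by
  induction V using Finset.strongInduction generalizing U with
  | H V ih =>
  obtain rfl | hV := V.eq_empty_or_nonempty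
  · rw [card_empty, card_eq_zero] at hcard
    subst hcard
    exact ⟨_, .empty⟩
  obtain ⟨v, hv, hvmax⟩ := V.exists_max_image x hV
  obtain ⟨u, hu, hvu⟩ : ∃ u ∈ U, x v < x u := by
    obtain ⟨u, hu⟩ := card_pos.1 <|
      (card_pos.2 ⟨v, mem_filter.2 ⟨hv, le_refl (x v)⟩⟩).trans_le (htail (x v))
    obtain ⟨hu, hvu⟩ := mem_filter.1 hu
    exact ⟨u, hu, lt_of_le_of_ne hvu (hsep u hu v hv).symm⟩
  have htail' : ∀ y, #{w ∈ V.erase v | y ≤ x w} ≤ #{w ∈ U.erase u | y ≤ x w} := by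
    intro y
    rw [filter_erase, filter_erase]
    by_cases hy : y ≤ x v
    · rw [card_erase_of_mem (mem_filter.2 ⟨hv, hy⟩),
        card_erase_of_mem (mem_filter.2 ⟨hu, hy.trans hvu.le⟩)]
      exact Nat.sub_le_sub_right (htail y) 1
    · have : {w ∈ V | y ≤ x w} = ∅ :=
        filter_eq_empty_iff.2 fun w hw h => hy (h.trans (hvmax w hw))
      simp [this]
  obtain ⟨P, hP⟩ := ih (V.erase v) (erase_ssubset hv) (U.erase u)
    (fun a ha b hb => hsep a (mem_of_mem_erase ha) b (mem_of_mem_erase hb))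
    (by rw [card_erase_of_mem hu, card_erase_of_mem hv, hcard]) htail'
  have hPuv := hP.insert hvu (notMem_erase u U) (fun h => hsep u hu u (mem_of_mem_erase h) rfl)
    (fun h => hsep v (mem_of_mem_erase h) v hv rfl) (notMem_erase v V)
  rw [insert_erase hu, insert_erase hv] at hPuv
  exact ⟨_, hPuv⟩

lemma exists_subset_card_eq_and_comparable {α : Type*} {s t : Finset α} {n : ℕ} (hst : s ⊆ t)
    (hn : n ≤ #t) : ∃ u ⊆ t, #u = n ∧ (s ⊆ u ∨ u ⊆ s) := by
  rcases le_total #s n with h | h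
  · obtain ⟨u, hsu, hut, hu⟩ := exists_subsuperset_card_eq hst h hn
    exact ⟨u, hut, hu, .inl hsu⟩
  · obtain ⟨u, hus, hu⟩ := exists_subset_card_eq h
    exact ⟨u, hus.trans hst, hu, .inr hus⟩

section Occupation

variable {α β : Type*} [Fintype α] [DecidableEq β]

def occupation (x : α → β) (σ : α → Bool) (y : β) : ℕ := #{i | x i = y ∧ σ i = true}

lemma card_filter_eq_of_occupation_eq {x : α → β} {σ τ : α → Bool}
    (h : occupation x σ = occupation x τ) (q : β → Prop) [DecidablePred q] :
    #{i | q (x i) ∧ σ i = true} = #{i | q (x i) ∧ τ i = true} := by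
  have hx : ∀ s : Finset α, Set.MapsTo x s (univ.image x) := fun s i _ => by simp
  rw [card_eq_sum_card_fiberwise (hx _), card_eq_sum_card_fiberwise (hx _)]
  refine sum_congr rfl fun y _ => ?_
  simp only [filter_filter]
  have hy' : #{i | x i = y ∧ σ i = true} = #{i | x i = y ∧ τ i = true} := congrFun h y
  by_cases hy : q y
  · convert hy' using 2 <;> ext i <;> simp only [mem_filter, mem_univ, true_and] <;> grind
  · congr 1
    ext i
    simp only [mem_filter, mem_univ, true_and]
    grind

theorem exists_occupation_eq_and_separated (x : α → β) (σ σ' : α → Bool) :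
    ∃ σ'' : α → Bool, occupation x σ'' = occupation x σ' ∧
      ∀ u v, σ u = true → σ'' u = false → σ v = false → σ'' v = true → x u ≠ x v := by
  classical
  have hsite (y : β) : ∃ C ⊆ ({i | x i = y} : Finset α), #C = occupation x σ' y ∧
      (({i | x i = y ∧ σ i = true} : Finset α) ⊆ C ∨
        C ⊆ ({i | x i = y ∧ σ i = true} : Finset α)) :=
    exists_subset_card_eq_and_comparable (fun i hi => by simp_all)
      (card_le_card fun i hi => by simp_all)
  choose C hCsite hCcard hCcomp using hsite
  refine ⟨fun i => decide (i ∈ C (x i)), funext fun y => ?_, fun u v hu hu'' hv hv'' huv => ?_⟩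
  · rw [← hCcard y, occupation]
    congr 1
    ext i
    constructor
    · simp +contextual
    · intro hi
      have := hCsite y hi
      simp_all
  · rcases hCcomp (x v) with h | h
    · have := h (mem_filter.2 ⟨mem_univ u, huv, hu⟩)
      simp_all
    · have := h (by simpa using hv'')
      simp_all

end Occupation

lemma card_filter_add_card_filter_eq {α : Type*} (s : Finset α) (σ τ : α → Bool) :
    #{i ∈ s | σ i = true} + #{i ∈ s | σ i = false ∧ τ i = true} =
      #{i ∈ s | τ i = true} + #{i ∈ s | σ i = true ∧ τ i = false} := by
  simp only [card_filter, ← sum_add_distrib]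
  refine sum_congr rfl fun i _ => ?_
  cases σ i <;> cases τ i <;> rfl

lemma IsMarriage.isSplitting {M : ℕ} {x : Fin M → ℤ} {σ σ'' : Fin M → Bool}
    {P : Fin M → Option (Fin M)}
    (hP : IsMarriage x {i | σ i = true ∧ σ'' i = false} {i | σ i = false ∧ σ'' i = true} P) :
    IsSplitting x σ σ'' P := by
  refine ⟨fun i hi => ?_, fun i j hij => ⟨hP.symm i j hij, ?_⟩, fun i j hij => ?_⟩
  · have := hP.notMem_of_eq_none i hi
    simp only [mem_filter, mem_univ, true_and] at this
    cases hσ : σ i <;> cases hσ'' : σ'' i <;> simp_all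
  · rintro rfl
    rcases hP.mem_of_eq_some i i hij with h | h <;> exact lt_irrefl _ h.2.2
  · rcases hP.mem_of_eq_some i j hij with h | h <;> simp_all

theorem tail_order_implies_splitting {M : ℕ} (x : Fin M → ℤ) (σ σ' : Fin M → Bool)
    (htail : ∀ y : ℤ,
      (Finset.univ.filter fun i => y ≤ x i ∧ σ' i = true).card ≤
      (Finset.univ.filter fun i => y ≤ x i ∧ σ i = true).card)
    (hcount : (Finset.univ.filter fun i => σ i = true).card
      = (Finset.univ.filter fun i => σ' i = true).card) :
    ∃ (σ'' : Fin M → Bool) (P : Fin M → Option (Fin M)),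
      (∀ y : ℤ,
        (Finset.univ.filter fun i => x i = y ∧ σ'' i = true).card
          = (Finset.univ.filter fun i => x i = y ∧ σ' i = true).card) ∧
      IsSplitting x σ σ'' P := by
  obtain ⟨σ'', hocc, hsep⟩ := exists_occupation_eq_and_separated x σ σ'
  set U : Finset (Fin M) := {i | σ i = true ∧ σ'' i = false}
  set V : Finset (Fin M) := {i | σ i = false ∧ σ'' i = true}
  have hbalance (s : Finset (Fin M)) := card_filter_add_card_filter_eq s σ σ''
  have hcard : #U = #V := by
    have h1 : #{i | σ'' i = true} = #{i | σ' i = true} := by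
      simpa using card_filter_eq_of_occupation_eq hocc (fun _ => True)
    have h2 : #{i | σ i = true} + #V = #{i | σ'' i = true} + #U := hbalance univ
    omega
  have htail' (y : ℤ) : #{v ∈ V | y ≤ x v} ≤ #{u ∈ U | y ≤ x u} := by
    have h1 : #{i | y ≤ x i ∧ σ'' i = true} = #{i | y ≤ x i ∧ σ' i = true} :=
      card_filter_eq_of_occupation_eq hocc (y ≤ ·)
    have h2 : #{i | y ≤ x i ∧ σ i = true} + #{v ∈ V | y ≤ x v} =
        #{i | y ≤ x i ∧ σ'' i = true} + #{u ∈ U | y ≤ x u} := by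
      simpa only [U, V, filter_filter, and_comm] using hbalance {i | y ≤ x i}
    have h3 := htail y
    omega
  obtain ⟨P, hP⟩ := exists_isMarriage x U V
    (fun u hu v hv => hsep u v (mem_filter.1 hu).2.1 (mem_filter.1 hu).2.2
      (mem_filter.1 hv).2.1 (mem_filter.1 hv).2.2) hcard htail'
  exact ⟨σ'', P, congrFun hocc, hP.isSplitting⟩
end

section
/- Let u', u : ℝ → ℝ≥0 be integrable with ∫u' = ∫u, and suppose F(r; u') ≤ F(r; u) for all r, where F(r; g) = ∫_r^∞ g. Then G_t ⋆ u' and G_t ⋆ u (heat-kernel convolutions with G_t(r,r') = e^{−(r−r')²/(2t)}/√(2πt)) satisfy F(r; G_t ⋆ u') ≤ F(r; G_t ⋆ u) for all r ∈ ℝ and t > 0. -/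
open MeasureTheory Set

/-- Heat-kernel convolution `(G_t ⋆ u)(r)`. -/
noncomputable def heatConv (t : ℝ) (u : ℝ → ℝ) (r : ℝ) : ℝ :=
  ∫ r' : ℝ, Real.exp (-(r - r')^2 / (2*t)) / Real.sqrt (2 * Real.pi * t) * u r'

/-- Right-tail integral `F(r; g) = ∫_r^∞ g`. -/
noncomputable def tailInt (g : ℝ → ℝ) (r : ℝ) : ℝ := ∫ y in Ioi r, g y

/-!
Taking right tails commutes with convolution: by Fubini and translation invariance of Lebesgue
measure, `F(r; k ⋆ u) = ∫ k(z) F(r - z; u) dz` for integrable `k` and `u`. A nonnegative kernel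
therefore averages the pointwise inequality `F(·; u') ≤ F(·; u)` into the same inequality for
`k ⋆ u'` and `k ⋆ u`.
-/

namespace tailInt

variable {u : ℝ → ℝ}

theorem comp_sub_right (u : ℝ → ℝ) (r z : ℝ) :
    ∫ y in Ioi r, u (y - z) = tailInt u (r - z) := by
  have h := (measurePreserving_sub_right volume z).setIntegral_preimage_emb
    (MeasurableEquiv.subRight z).measurableEmbedding u (Ioi (r - z))
  rwa [preimage_sub_const_Ioi, sub_add_cancel] at h

theorem continuous (hu : Integrable u) : Continuous (tailInt u) := by
  have h : tailInt u = fun s => tailInt u 0 - ∫ x in (0 : ℝ)..s, u x := funext fun s => by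
    rw [tailInt, tailInt, ← intervalIntegral.integral_Ioi_sub_Ioi' hu.integrableOn hu.integrableOn,
      sub_sub_cancel]
  rw [h]
  exact continuous_const.sub (hu.continuous_primitive 0)

theorem norm_le_integral_norm (hu : Integrable u) (s : ℝ) : ‖tailInt u s‖ ≤ ∫ x, ‖u x‖ :=
  (norm_integral_le_integral_norm _).trans
    (setIntegral_le_integral hu.norm (Filter.Eventually.of_forall fun _ => norm_nonneg _))

end tailInt

section Convolution

variable {k u u' : ℝ → ℝ}

theorem tailInt_convolution (hk : Integrable k) (hu : Integrable u) (r : ℝ) :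
    tailInt (fun y => ∫ x, k (y - x) * u x) r = ∫ z, k z * tailInt u (r - z) := by
  have hprod : Integrable (Function.uncurry fun y z => k z * u (y - z))
      ((volume.restrict (Ioi r)).prod volume) :=
    (hk.convolution_integrand (ContinuousLinearMap.mul ℝ ℝ) hu).mono_measure
      (Measure.prod_mono Measure.restrict_le_self le_rfl)
  calc tailInt (fun y => ∫ x, k (y - x) * u x) r
      = ∫ y in Ioi r, ∫ z, k z * u (y - z) := by
        refine setIntegral_congr_fun measurableSet_Ioi fun y _ => ?_
        simpa using integral_sub_left_eq_self (fun z => k z * u (y - z)) volume y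
    _ = ∫ z, ∫ y in Ioi r, k z * u (y - z) := integral_integral_swap hprod
    _ = ∫ z, k z * tailInt u (r - z) := by
        simp_rw [integral_const_mul, tailInt.comp_sub_right]

theorem integrable_mul_tailInt_sub (hk : Integrable k) (hu : Integrable u) (r : ℝ) :
    Integrable fun z => k z * tailInt u (r - z) :=
  hk.mul_bdd ((tailInt.continuous hu).comp (continuous_sub_left r)).aestronglyMeasurable
    (Filter.Eventually.of_forall fun z => tailInt.norm_le_integral_norm hu (r - z))

theorem tailInt_convolution_mono (hk : Integrable k) (hk0 : ∀ x, 0 ≤ k x)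
    (hu' : Integrable u') (hu : Integrable u) (hord : ∀ s, tailInt u' s ≤ tailInt u s) (r : ℝ) :
    tailInt (fun y => ∫ x, k (y - x) * u' x) r ≤ tailInt (fun y => ∫ x, k (y - x) * u x) r := by
  rw [tailInt_convolution hk hu', tailInt_convolution hk hu]
  exact integral_mono (integrable_mul_tailInt_sub hk hu' r) (integrable_mul_tailInt_sub hk hu r)
    fun z => mul_le_mul_of_nonneg_left (hord _) (hk0 z)

end Convolution

noncomputable def heatKernel (t x : ℝ) : ℝ :=
  Real.exp (-x ^ 2 / (2 * t)) / Real.sqrt (2 * Real.pi * t)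

theorem heatKernel_nonneg (t x : ℝ) : 0 ≤ heatKernel t x := by
  unfold heatKernel; positivity

theorem integrable_heatKernel {t : ℝ} (ht : 0 < t) : Integrable (heatKernel t) := by
  refine ((integrable_exp_neg_mul_sq (b := 1 / (2 * t)) (by positivity)).div_const
    (Real.sqrt (2 * Real.pi * t))).congr (Filter.Eventually.of_forall fun x => ?_)
  simp only [heatKernel]
  ring_nf

theorem heat_kernel_preserves_order_general (u' u : ℝ → ℝ)
    (hu' : Integrable u') (hu : Integrable u)
    (hord : ∀ r, tailInt u' r ≤ tailInt u r) :
    ∀ t : ℝ, 0 < t → ∀ r : ℝ, tailInt (heatConv t u') r ≤ tailInt (heatConv t u) r :=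
  fun _ ht => tailInt_convolution_mono (integrable_heatKernel ht) (heatKernel_nonneg _) hu' hu hord

/-- Convolution with the Gaussian heat kernel preserves the right-tail partial order
among nonnegative integrable functions of equal total mass. -/
theorem heat_kernel_preserves_order (u' u : ℝ → ℝ)
    (hu' : Integrable u') (hu : Integrable u)
    (hu'0 : ∀ r, 0 ≤ u' r) (hu0 : ∀ r, 0 ≤ u r)
    (hmass : ∫ r, u' r = ∫ r, u r)
    (hord : ∀ r, tailInt u' r ≤ tailInt u r) :
    ∀ t : ℝ, 0 < t → ∀ r : ℝ, tailInt (heatConv t u') r ≤ tailInt (heatConv t u) r :=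
  heat_kernel_preserves_order_general u' u hu' hu hord
end

section
/- Let φ : ℝ → ℝ≥0 be integrable, 0 < M_0 < ∫φ, and suppose (u,v) with u+v = φ, ∫u = M_0, u, v ∈ 𝒰 (continuous with supports being open intervals (L,R_u) and (D_v,E) with L < D_v < R_u < E, positive inside). Given 0 < m < M_0 small enough, define H and Z by ∫_{−∞}^{H} u = m and ∫_{Z}^{∞} v = m (with H < Z), and set f* = u + v·1_{[Z,∞)} − u·1_{(−∞,H]}, g* = v + u·1_{(−∞,H]} − v·1_{[Z,∞)}. Then f*+g* = φ, ∫f* = M_0, and (u,v) ≼ (f*,g*), i.e., F(r;u) ≤ F(r;f*) for all r. -/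
open MeasureTheory Set

/-!
Passing from `u` to `f*` subtracts the right tail of `u · 1_{(-∞,H]}` and adds that of
`v · 1_{[Z,∞)}`. For `r < Z` the added tail is the whole mass `m`, which bounds the subtracted
one; for `r ≥ Z > H` nothing is subtracted.
-/

theorem integral_add_sub {α : Type*} [MeasurableSpace α] {μ : Measure α} {f g h : α → ℝ}
    (hf : Integrable f μ) (hg : Integrable g μ) (hh : Integrable h μ) :
    ∫ x, f x + g x - h x ∂μ = ∫ x, f x ∂μ + ∫ x, g x ∂μ - ∫ x, h x ∂μ := by
  rw [integral_sub (f := fun x => f x + g x) (hf.add hg) hh, integral_add hf hg]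

theorem tailInt_add_sub {f g h : ℝ → ℝ} (hf : Integrable f) (hg : Integrable g)
    (hh : Integrable h) (r : ℝ) :
    tailInt (fun x => f x + g x - h x) r = tailInt f r + tailInt g r - tailInt h r :=
  integral_add_sub hf.integrableOn hg.integrableOn hh.integrableOn

theorem tailInt_indicator_Iic_le_tailInt_indicator_Ici {u v : ℝ → ℝ} {H Z : ℝ}
    (hu : IntegrableOn u (Iic H)) (hu0 : ∀ x, 0 ≤ u x) (hv0 : ∀ x, 0 ≤ v x) (hHZ : H ≤ Z)
    (hmass : ∫ x in Iic H, u x ≤ ∫ x in Ici Z, v x) (r : ℝ) :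
    tailInt ((Iic H).indicator u) r ≤ tailInt ((Ici Z).indicator v) r := by
  unfold tailInt
  rw [setIntegral_indicator measurableSet_Iic, setIntegral_indicator measurableSet_Ici]
  rcases lt_or_ge r Z with hrZ | hZr
  · rw [inter_eq_self_of_subset_right (Ici_subset_Ioi.2 hrZ)]
    calc ∫ x in Ioi r ∩ Iic H, u x ≤ ∫ x in Iic H, u x :=
          setIntegral_mono_set hu (ae_of_all _ hu0) inter_subset_right.eventuallyLE
      _ ≤ ∫ x in Ici Z, v x := hmass
  · rw [Ioi_inter_Iic, Ioc_eq_empty (hHZ.trans hZr).not_gt, Measure.restrict_empty,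
      integral_zero_measure]
    exact setIntegral_nonneg (measurableSet_Ioi.inter measurableSet_Ici) fun x _ => hv0 x

theorem upper_transfer_dominates_general (φ u v : ℝ → ℝ) (M₀ m H Z : ℝ)
    (hu : Integrable u) (hv : Integrable v)
    (hu0 : ∀ r, 0 ≤ u r) (hv0 : ∀ r, 0 ≤ v r)
    (hφ : ∀ r, φ r = u r + v r)
    (humass : ∫ r, u r = M₀)
    (hH : ∫ r in Iic H, u r = m) (hZ : ∫ r in Ici Z, v r = m) (hHZ : H < Z) :
    (∀ r, (u r + indicator (Ici Z) v r - indicator (Iic H) u r)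
        + (v r + indicator (Iic H) u r - indicator (Ici Z) v r) = φ r) ∧
    (∫ r, (u r + indicator (Ici Z) v r - indicator (Iic H) u r) = M₀) ∧
    (∀ r, tailInt u r
      ≤ tailInt (fun s => u s + indicator (Ici Z) v s - indicator (Iic H) u s) r) := by
  have hvZ : Integrable ((Ici Z).indicator v) := hv.indicator measurableSet_Ici
  have huH : Integrable ((Iic H).indicator u) := hu.indicator measurableSet_Iic
  refine ⟨fun r => by rw [hφ r]; ring, ?_, fun r => ?_⟩
  · rw [integral_add_sub hu hvZ huH, integral_indicator measurableSet_Ici,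
      integral_indicator measurableSet_Iic, hH, hZ, humass]
    ring
  · have hmoved := tailInt_indicator_Iic_le_tailInt_indicator_Ici hu.integrableOn hu0 hv0
      hHZ.le (hH.trans hZ.symm).le r
    rw [tailInt_add_sub hu hvZ huH]
    linarith

/-- Proposition 5.3(1), first part: the pair `(f*, g*)` obtained by transferring the
leftmost `m`-mass of `u` to `g*` and the rightmost `m`-mass of `v` to `f*` belongs
to `ℬ(φ, M₀)` and dominates `(u,v)`. -/
theorem upper_transfer_dominates (φ u v : ℝ → ℝ) (M₀ m L Ru Dv E H Z : ℝ)
    (hucont : Continuous u) (hvcont : Continuous v)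
    (hu : Integrable u) (hv : Integrable v)
    (hu0 : ∀ r, 0 ≤ u r) (hv0 : ∀ r, 0 ≤ v r)
    (hsuppu : Function.support u = Ioo L Ru)
    (hsuppv : Function.support v = Ioo Dv E)
    (hLD : L < Dv) (hDR : Dv < Ru) (hRE : Ru < E)
    (hφ : ∀ r, φ r = u r + v r)
    (humass : ∫ r, u r = M₀)
    (hM₀ : 0 < M₀) (hM₀' : M₀ < ∫ r, φ r)
    (hm : 0 < m) (hmM : m < M₀)
    (hH : ∫ r in Iic H, u r = m) (hZ : ∫ r in Ici Z, v r = m) (hHZ : H < Z) :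
    (∀ r, (u r + indicator (Ici Z) v r - indicator (Iic H) u r)
        + (v r + indicator (Iic H) u r - indicator (Ici Z) v r) = φ r) ∧
    (∫ r, (u r + indicator (Ici Z) v r - indicator (Iic H) u r) = M₀) ∧
    (∀ r, tailInt u r
      ≤ tailInt (fun s => u s + indicator (Ici Z) v s - indicator (Iic H) u s) r) :=
  upper_transfer_dominates_general φ u v M₀ m H Z hu hv hu0 hv0 hφ humass hH hZ hHZ
end

section
/- With f*, g*, u, v, H, Z as in the previous statement, and additionally a pair (u',v') with u'+v' = φ, ∫u' = M_0, satisfying F(r;u') ≤ F(r;u) + m for all r, we have (u',v') ≼ (f*,g*): for r ≤ H, F(r;f*) = M_0 ≥ F(r;u'); for H ≤ r ≤ Z, F(r;f*) = F(r;u) + m ≥ F(r;u'); and for r ≥ Z, f* = φ on (Z,∞) hence F(r;f*) = ∫_r^∞ φ ≥ F(r;u'). -/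
open MeasureTheory Set

/-!
The transfer `f* = u + 1_{[Z,∞)} v - 1_{(-∞,H]} u` moves the mass `m` of `u` below `H` onto the
mass `m` of `v` above `Z`. Hence its tail is constant `M₀ = (M₀ - m) + m` up to `H`, equals
`F(r;u) + m` between `H` and `Z`, and beyond `Z` it coincides with `φ = u + v`. Each of these
three bounds dominates `F(r;u')`: the first because `u' ≥ 0` has mass `M₀`,
the second by the hypothesis, the third because `u' ≤ φ`.
-/

section TailIntegral

variable {f g : ℝ → ℝ} {r : ℝ}

theorem tailInt_add (hf : IntegrableOn f (Ioi r)) (hg : IntegrableOn g (Ioi r)) :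
    tailInt (f + g) r = tailInt f r + tailInt g r :=
  integral_add hf hg

theorem tailInt_sub (hf : IntegrableOn f (Ioi r)) (hg : IntegrableOn g (Ioi r)) :
    tailInt (f - g) r = tailInt f r - tailInt g r :=
  integral_sub hf hg

theorem tailInt_congr (h : ∀ s, r < s → f s = g s) : tailInt f r = tailInt g r :=
  setIntegral_congr_fun measurableSet_Ioi h

theorem tailInt_mono (hf : IntegrableOn f (Ioi r)) (hg : IntegrableOn g (Ioi r))
    (h : ∀ s, f s ≤ g s) : tailInt f r ≤ tailInt g r :=
  setIntegral_mono hf hg h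

theorem tailInt_le_integral (hf : Integrable f) (hf0 : ∀ s, 0 ≤ f s) :
    tailInt f r ≤ ∫ s, f s :=
  setIntegral_le_integral hf (Filter.Eventually.of_forall hf0)

theorem integral_Iic_add_tailInt (hf : Integrable f) :
    (∫ s in Iic r, f s) + tailInt f r = ∫ s, f s :=
  intervalIntegral.integral_Iic_add_Ioi hf.integrableOn hf.integrableOn

theorem tailInt_indicator_Ici_of_le {Z : ℝ} (hr : r ≤ Z) :
    tailInt (indicator (Ici Z) f) r = ∫ s in Ici Z, f s := by
  rw [tailInt, setIntegral_indicator measurableSet_Ici]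
  rcases hr.eq_or_lt with rfl | hr
  · rw [inter_eq_left.mpr Ioi_subset_Ici_self, integral_Ici_eq_integral_Ioi]
  · rw [inter_eq_right.mpr (Ici_subset_Ioi.mpr hr)]

theorem tailInt_indicator_Iic_of_le {H : ℝ} (hf : IntegrableOn f (Iic H)) (hr : r ≤ H) :
    tailInt (indicator (Iic H) f) r = (∫ s in Iic H, f s) - ∫ s in Iic r, f s := by
  rw [tailInt, setIntegral_indicator measurableSet_Iic, Ioi_inter_Iic, eq_sub_iff_add_eq',
    ← setIntegral_union (Iic_disjoint_Ioc le_rfl) measurableSet_Ioc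
      (hf.mono_set (Iic_subset_Iic.mpr hr)) (hf.mono_set Ioc_subset_Iic_self),
    Iic_union_Ioc_eq_Iic hr]

theorem tailInt_indicator_Iic_of_ge {H : ℝ} (hr : H ≤ r) :
    tailInt (indicator (Iic H) f) r = 0 := by
  rw [tailInt, setIntegral_indicator measurableSet_Iic, Ioi_inter_Iic,
    Ioc_eq_empty (not_lt.mpr hr), setIntegral_empty]

end TailIntegral

/-- The paper's `f*`. -/
noncomputable def upperTransfer (u v : ℝ → ℝ) (H Z : ℝ) : ℝ → ℝ :=
  fun s => u s + indicator (Ici Z) v s - indicator (Iic H) u s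

section UpperTransfer

variable {u v : ℝ → ℝ} {H Z r : ℝ}

theorem tailInt_upperTransfer (hu : Integrable u) (hv : Integrable v) :
    tailInt (upperTransfer u v H Z) r
      = tailInt u r + tailInt (indicator (Ici Z) v) r - tailInt (indicator (Iic H) u) r := by
  have hvZ := (hv.indicator measurableSet_Ici (s := Ici Z)).integrableOn (s := Ioi r)
  have huH := (hu.indicator measurableSet_Iic (s := Iic H)).integrableOn (s := Ioi r)
  rw [← tailInt_add hu.integrableOn hvZ, ← tailInt_sub (hu.integrableOn.add hvZ) huH]
  rfl

theorem tailInt_upperTransfer_of_le (hu : Integrable u) (hv : Integrable v)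
    (hrH : r ≤ H) (hrZ : r ≤ Z) :
    tailInt (upperTransfer u v H Z) r
      = (∫ s, u s) + (∫ s in Ici Z, v s) - ∫ s in Iic H, u s := by
  rw [tailInt_upperTransfer hu hv, tailInt_indicator_Ici_of_le hrZ,
    tailInt_indicator_Iic_of_le hu.integrableOn hrH, ← integral_Iic_add_tailInt hu (r := r)]
  ring

theorem tailInt_upperTransfer_of_mem_Icc (hu : Integrable u) (hv : Integrable v)
    (hr : r ∈ Icc H Z) :
    tailInt (upperTransfer u v H Z) r = tailInt u r + ∫ s in Ici Z, v s := by
  rw [tailInt_upperTransfer hu hv, tailInt_indicator_Ici_of_le hr.2,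
    tailInt_indicator_Iic_of_ge hr.1, sub_zero]

theorem upperTransfer_of_lt (hHZ : H < Z) (hr : Z < r) :
    upperTransfer u v H Z r = u r + v r := by
  simp only [upperTransfer, indicator_of_mem (mem_Ici.mpr hr.le),
    indicator_of_notMem (notMem_Iic.mpr (hHZ.trans hr)), sub_zero]

end UpperTransfer

theorem tailInt_le_of_piecewise_bounds {f u u' φ : ℝ → ℝ} {M m H Z : ℝ}
    (hu' : Integrable u') (hφ : Integrable φ) (hu'0 : ∀ s, 0 ≤ u' s) (hu'φ : ∀ s, u' s ≤ φ s)
    (hu'mass : ∫ s, u' s = M) (hmod : ∀ r, tailInt u' r ≤ tailInt u r + m)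
    (hleft : ∀ r ≤ H, tailInt f r = M)
    (hmid : ∀ r, H ≤ r → r ≤ Z → tailInt f r = tailInt u r + m)
    (hright : ∀ r, Z < r → f r = φ r) (r : ℝ) :
    tailInt u' r ≤ tailInt f r := by
  rcases le_or_gt r H with hrH | hHr
  · exact hleft r hrH ▸ hu'mass ▸ tailInt_le_integral hu' hu'0
  rcases le_or_gt r Z with hrZ | hZr
  · exact hmid r hHr.le hrZ ▸ hmod r
  · rw [tailInt_congr fun s hs => hright s (hZr.trans hs)]
    exact tailInt_mono hu'.integrableOn hφ.integrableOn hu'φ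

theorem upper_transfer_dominates_modulo_general (φ u v u' v' : ℝ → ℝ) (M₀ m H Z : ℝ)
    (hu : Integrable u) (hv : Integrable v)
    (hφ : ∀ r, φ r = u r + v r)
    (humass : ∫ r, u r = M₀)
    (hH : ∫ r in Iic H, u r = m) (hZ : ∫ r in Ici Z, v r = m) (hHZ : H < Z)
    (hu' : Integrable u')
    (hu'0 : ∀ r, 0 ≤ u' r) (hv'0 : ∀ r, 0 ≤ v' r)
    (hsum' : ∀ r, u' r + v' r = φ r)
    (hu'mass : ∫ r, u' r = M₀)
    (hmod : ∀ r, tailInt u' r ≤ tailInt u r + m) :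
    (∀ r ≤ H, tailInt (fun s => u s + indicator (Ici Z) v s - indicator (Iic H) u s) r = M₀) ∧
    (∀ r, H ≤ r → r ≤ Z →
      tailInt (fun s => u s + indicator (Ici Z) v s - indicator (Iic H) u s) r
        = tailInt u r + m) ∧
    (∀ r, Z < r → u r + indicator (Ici Z) v r - indicator (Iic H) u r = φ r) ∧
    (∀ r, tailInt u' r
      ≤ tailInt (fun s => u s + indicator (Ici Z) v s - indicator (Iic H) u s) r) := by
  have hleft : ∀ r ≤ H, tailInt (upperTransfer u v H Z) r = M₀ := fun r hr => by
    rw [tailInt_upperTransfer_of_le hu hv hr (hr.trans hHZ.le), humass, hZ, hH,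
      add_sub_cancel_right]
  have hmid : ∀ r, H ≤ r → r ≤ Z → tailInt (upperTransfer u v H Z) r = tailInt u r + m :=
    fun r hHr hrZ => by rw [tailInt_upperTransfer_of_mem_Icc hu hv ⟨hHr, hrZ⟩, hZ]
  have hright : ∀ r, Z < r → upperTransfer u v H Z r = φ r :=
    fun r hr => (upperTransfer_of_lt hHZ hr).trans (hφ r).symm
  have hφint : Integrable φ := (hu.add hv).congr (Filter.Eventually.of_forall fun r => (hφ r).symm)
  have hu'φ : ∀ r, u' r ≤ φ r := fun r => hsum' r ▸ le_add_of_nonneg_right (hv'0 r)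
  exact ⟨hleft, hmid, hright,
    tailInt_le_of_piecewise_bounds hu' hφint hu'0 hu'φ hu'mass hmod hleft hmid hright⟩

/-- Proposition 5.3(1), second part: if `(u',v') ≼ (u,v)` modulo `m` in `ℬ(φ, M₀)`,
then `(u',v')` is exactly dominated by the transferred pair `(f*, g*)`. -/
theorem upper_transfer_dominates_modulo (φ u v u' v' : ℝ → ℝ) (M₀ m L Ru Dv E H Z : ℝ)
    (hucont : Continuous u) (hvcont : Continuous v)
    (hu : Integrable u) (hv : Integrable v)
    (hu0 : ∀ r, 0 ≤ u r) (hv0 : ∀ r, 0 ≤ v r)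
    (hsuppu : Function.support u = Ioo L Ru)
    (hsuppv : Function.support v = Ioo Dv E)
    (hLD : L < Dv) (hDR : Dv < Ru) (hRE : Ru < E)
    (hφ : ∀ r, φ r = u r + v r)
    (humass : ∫ r, u r = M₀)
    (hM₀ : 0 < M₀) (hM₀' : M₀ < ∫ r, φ r)
    (hm : 0 < m) (hmM : m < M₀)
    (hH : ∫ r in Iic H, u r = m) (hZ : ∫ r in Ici Z, v r = m) (hHZ : H < Z)
    (hu' : Integrable u') (hv' : Integrable v')
    (hu'0 : ∀ r, 0 ≤ u' r) (hv'0 : ∀ r, 0 ≤ v' r)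
    (hsum' : ∀ r, u' r + v' r = φ r)
    (hu'mass : ∫ r, u' r = M₀)
    (hmod : ∀ r, tailInt u' r ≤ tailInt u r + m) :
    (∀ r ≤ H, tailInt (fun s => u s + indicator (Ici Z) v s - indicator (Iic H) u s) r = M₀) ∧
    (∀ r, H ≤ r → r ≤ Z →
      tailInt (fun s => u s + indicator (Ici Z) v s - indicator (Iic H) u s) r
        = tailInt u r + m) ∧
    (∀ r, Z < r → u r + indicator (Ici Z) v r - indicator (Iic H) u r = φ r) ∧
    (∀ r, tailInt u' r
      ≤ tailInt (fun s => u s + indicator (Ici Z) v s - indicator (Iic H) u s) r) :=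
  upper_transfer_dominates_modulo_general φ u v u' v' M₀ m H Z hu hv hφ humass hH hZ hHZ hu' hu'0
    hv'0 hsum' hu'mass hmod
end
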